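/- arXiv:2002.06341 — 7 statements merged into one kernel-verified Lean document; each statement's English description precedes it below -/
import Mathlib

section
/- Let a, b be two distinct alternatives and let φ be a social choice function defined on all profiles with range {a,b}. Then φ is coalitionally strategy-proof if and only if φ is compatible with the dominance relation ⊐, i.e., for all profiles P, Q: P ⊐_{φ(P)} Q implies φ(Q) = φ(P). -/
universe u v

variable {V : Type u} {A : Type v}

/-- A weak ordering on `A`: a complete (total) and transitive binary relation. -/
abbrev WeakOrd (A : Type v) := {W : A → A → Prop // Total W ∧ Transitive W}

/-- A profile assigns to every voter a weak ordering on the alternatives. -/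
abbrev Profile (V : Type u) (A : Type v) := V → WeakOrd A

/-- Strict preference `x ≻_W y`. -/
def SPref (W : WeakOrd A) (x y : A) : Prop := W.1 x y ∧ ¬ W.1 y x

/-- Indifference `x ∼_W y`. -/
def Indiff (W : WeakOrd A) (x y : A) : Prop := W.1 x y ∧ W.1 y x

/-- `D(a,P)` (relative to the pair `{a,b}`): voters strictly preferring `a` to `b`. -/
def Dset (a b : A) (P : Profile V A) : Set V := {v | SPref (P v) a b}

/-- `I(P)`: voters indifferent between `a` and `b`. -/
def Iset (a b : A) (P : Profile V A) : Set V := {v | Indiff (P v) a b}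

/-- The `{a,b}`-equivalence set `E(P,Q)`. -/
def Eset (a b : A) (P Q : Profile V A) : Set V :=
  {v | P v = Q v ∨ (SPref (P v) a b ∧ SPref (Q v) a b) ∨ (SPref (P v) b a ∧ SPref (Q v) b a)}

/-- `P ⊐_a Q`. -/
def DomA (a b : A) (P Q : Profile V A) : Prop :=
  (Set.univ : Set V) = Eset a b P Q ∪ (Iset a b P ∩ Dset a b Q)

/-- `P ⊐_b Q`. -/
def DomB (a b : A) (P Q : Profile V A) : Prop :=
  (Set.univ : Set V) = Eset a b P Q ∪ (Iset a b P ∩ Dset b a Q)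

/-- The coalition `D` can manipulate the profile `P` under `φ`. -/
def Manipulates (φ : Profile V A → A) (D : Set V) (P : Profile V A) : Prop :=
  D.Nonempty ∧ ∃ Q : Profile V A, (∀ v ∉ D, Q v = P v) ∧ ∀ v ∈ D, SPref (P v) (φ Q) (φ P)

/-- Coalitional strategy-proofness. -/
def CSP (φ : Profile V A → A) : Prop :=
  ∀ (D : Set V) (P : Profile V A), ¬ Manipulates φ D P

/-- A superset-closed family on the set `Wset`. -/
def SSCF (Wset : Set V) (F : Set (Set V)) : Prop :=
  (∀ E ∈ F, E ⊆ Wset) ∧ ∀ E₁ E₂ : Set V, E₁ ∈ F → E₁ ⊆ E₂ → E₂ ⊆ Wset → E₂ ∈ F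

/-- The dual family `F°` of `F` on `Wset`. -/
def dualF (Wset : Set V) (F : Set (Set V)) : Set (Set V) :=
  {E | E ⊆ Wset ∧ Wset \ E ∉ F}

/-- The class `𝓟_a(π,F)`, where the partial `{a,b}`-indifference profile `π` has domain `I`. -/
def ClassA (a b : A) (I : Set V) (pc : V → WeakOrd A) (F : Set (Set V)) :
    Set (Profile V A) :=
  {P | Dset a b P ∩ Iᶜ ∈ F ∧ ∀ v ∈ I, P v = pc v ∨ SPref (P v) a b}

/-- The class `𝓟_b(π,F)`, where the partial `{a,b}`-indifference profile `π` has domain `I`. -/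
def ClassB (a b : A) (I : Set V) (pc : V → WeakOrd A) (F : Set (Set V)) :
    Set (Profile V A) :=
  {P | Dset b a P ∩ Iᶜ ∈ dualF Iᶜ F ∧ ∀ v ∈ I, P v = pc v ∨ SPref (P v) b a}

/-- `𝓟_λ = 𝓟_a(π,F) ∪ 𝓟_b(π,F)`. -/
def PClass (a b : A) (I : Set V) (pc : V → WeakOrd A) (F : Set (Set V)) :
    Set (Profile V A) :=
  ClassA a b I pc F ∪ ClassB a b I pc F

/-- The set of indices `λ < β` with `P ∈ 𝓟_λ`; its least element is the index `λ(P)`,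
and `λ(P) = ∞` corresponds to this set being empty. -/
def idxSet (a b : A) (β : Ordinal.{max u v}) (I : Ordinal.{max u v} → Set V)
    (pc : Ordinal.{max u v} → V → WeakOrd A) (F : Ordinal.{max u v} → Set (Set V))
    (P : Profile V A) : Set Ordinal.{max u v} :=
  {l | l < β ∧ P ∈ PClass a b (I l) (pc l) (F l)}

/-- `⟨(π^λ)_{λ<β}, (F_λ)_{λ<β}⟩` is a double collection with respect to `{a,b}`:
`β ≥ 1`, each `π^λ` (with domain `I_λ`) is a partial `{a,b}`-indifference profile and
each `F_λ` is a superset-closed family on `I_λᶜ`. -/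
def IsDoubleCollection (a b : A) (β : Ordinal.{max u v}) (I : Ordinal.{max u v} → Set V)
    (pc : Ordinal.{max u v} → V → WeakOrd A) (F : Ordinal.{max u v} → Set (Set V)) : Prop :=
  1 ≤ β ∧ ∀ l < β, (∀ v ∈ I l, Indiff (pc l v) a b) ∧ SSCF (I l)ᶜ (F l)

/-- `ψ` is the ψ-type scf associated with `x` and the double collection: `ψ P = a` if
`P ∈ 𝓟_a(π^{λ(P)},F_{λ(P)})`, `ψ P = b` if `P ∈ 𝓟_b(π^{λ(P)},F_{λ(P)})`, and `ψ P = x`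
if `λ(P) = ∞`. -/
def IsPsiOf (a b x : A) (β : Ordinal.{max u v}) (I : Ordinal.{max u v} → Set V)
    (pc : Ordinal.{max u v} → V → WeakOrd A) (F : Ordinal.{max u v} → Set (Set V))
    (ψ : Profile V A → A) : Prop :=
  ∀ P : Profile V A,
    (∀ l, IsLeast (idxSet a b β I pc F P) l →
      (P ∈ ClassA a b (I l) (pc l) (F l) → ψ P = a) ∧
      (P ∈ ClassB a b (I l) (pc l) (F l) → ψ P = b)) ∧
    (idxSet a b β I pc F P = ∅ → ψ P = x)

/-- `φ` (with range `{a,b}`) is compatible with the dominance relation `⊐`: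
`P ⊐_{φ(P)} Q` implies `φ Q = φ P`. -/
def Compatible (a b : A) (φ : Profile V A → A) : Prop :=
  ∀ P Q : Profile V A,
    ((φ P = a ∧ DomA a b P Q) ∨ (φ P = b ∧ DomB a b P Q)) → φ Q = φ P

section Aux

attribute [local instance] Classical.propDecidable

variable {V : Type u} {A : Type v}

private lemma sPref_irrefl (W : WeakOrd A) (x : A) : ¬ SPref W x x :=
  fun h => h.2 h.1

private lemma weak_cases (W : WeakOrd A) (x y : A) :
    SPref W x y ∨ SPref W y x ∨ Indiff W x y := by
  rcases W.2.1 x y with h | h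
  · by_cases h' : W.1 y x
    · exact Or.inr (Or.inr ⟨h, h'⟩)
    · exact Or.inl ⟨h, h'⟩
  · by_cases h' : W.1 x y
    · exact Or.inr (Or.inr ⟨h', h⟩)
    · exact Or.inr (Or.inl ⟨h, h'⟩)

private lemma sPref_asymm {W : WeakOrd A} {x y : A} (h : SPref W x y) : ¬ SPref W y x :=
  fun h' => h.2 h'.1

private lemma eset_symm (a b : A) (P Q : Profile V A) : Eset a b P Q = Eset b a P Q := by
  ext v; simp only [Eset, Set.mem_setOf_eq]; tauto

private lemma iset_symm (a b : A) (P : Profile V A) : Iset a b P = Iset b a P := by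
  ext v; simp only [Iset, Indiff, Set.mem_setOf_eq]; tauto

private lemma domB_iff (a b : A) (P Q : Profile V A) : DomB a b P Q ↔ DomA b a P Q := by
  unfold DomA DomB
  rw [eset_symm a b, iset_symm a b]

private lemma compatible_symm {a b : A} {φ : Profile V A → A}
    (hc : Compatible a b φ) : Compatible b a φ := by
  intro P Q hyp
  apply hc P Q
  rcases hyp with ⟨h1, h2⟩ | ⟨h1, h2⟩
  · exact Or.inr ⟨h1, (domB_iff a b P Q).mpr h2⟩
  · exact Or.inl ⟨h1, (domB_iff b a P Q).mp h2⟩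

/-- All-indifferent weak order. -/
private def topW : WeakOrd A :=
  ⟨fun _ _ => True, fun _ _ => Or.inl trivial, fun {_ _ _} _ _ => trivial⟩

private lemma range_cases {a b : A} {φ : Profile V A → A}
    (hrange : Set.range φ = {a, b}) (P : Profile V A) : φ P = a ∨ φ P = b := by
  have : φ P ∈ Set.range φ := ⟨P, rfl⟩
  rw [hrange] at this
  simpa using this

/-- CSP implies the `a`-branch of compatibility. -/
private lemma csp_dir {a b : A} (hab : a ≠ b) {φ : Profile V A → A}
    (hrange : Set.range φ = {a, b}) (h : CSP φ) :
    ∀ P Q : Profile V A, φ P = a → DomA a b P Q → φ Q = a := by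
  intro P Q hPa hdom
  by_contra hQ
  have hQb : φ Q = b := (range_cases hrange Q).resolve_left hQ
  have hmem : ∀ v : V, v ∈ Eset a b P Q ∪ (Iset a b P ∩ Dset a b Q) := by
    intro v; rw [← hdom]; exact Set.mem_univ v
  set R : Profile V A := fun v => if SPref (Q v) b a then Q v else P v with hR
  -- Step 1: φ R = a
  have hRa : φ R = a := by
    by_contra hRne
    have hRb : φ R = b := (range_cases hrange R).resolve_left hRne
    apply h {v | R v ≠ P v} P
    refine ⟨?_, R, ?_, ?_⟩
    · by_contra hempty
      rw [Set.not_nonempty_iff_eq_empty, Set.eq_empty_iff_forall_notMem] at hempty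
      have : R = P := funext fun v => not_not.mp (hempty v)
      rw [← this, hRb] at hPa
      exact hab hPa.symm
    · intro v hv
      exact not_not.mp hv
    · intro v hv
      have hne : R v ≠ P v := hv
      have hQba : SPref (Q v) b a := by
        by_contra hq
        simp only [hR, if_neg hq] at hne
        exact hne rfl
      have hRvQ : R v = Q v := by simp only [hR, if_pos hQba]
      have hPba : SPref (P v) b a := by
        rcases hmem v with hE | ⟨hI, hD⟩
        · rcases hE with hPQ | ⟨hPab, hQab⟩ | ⟨hPba, _⟩
          · rw [hPQ]; exact hQba
          · exact absurd hQab (sPref_asymm hQba)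
          · exact hPba
        · exact absurd hD (sPref_asymm hQba)
      rw [hRb, hPa]; exact hPba
  -- Step 2: manipulate Q by {v | R v ≠ Q v}
  apply h {v | R v ≠ Q v} Q
  refine ⟨?_, R, ?_, ?_⟩
  · by_contra hempty
    rw [Set.not_nonempty_iff_eq_empty, Set.eq_empty_iff_forall_notMem] at hempty
    have : R = Q := funext fun v => not_not.mp (hempty v)
    rw [← this, hRa] at hQ
    exact hQ rfl
  · intro v hv
    exact not_not.mp hv
  · intro v hv
    have hne : R v ≠ Q v := hv
    have hnq : ¬ SPref (Q v) b a := by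
      intro hq
      simp only [hR, if_pos hq] at hne
      exact hne rfl
    have hRvP : R v = P v := by simp only [hR, if_neg hnq]
    have hPQne : P v ≠ Q v := by rw [← hRvP]; exact hne
    have hQab : SPref (Q v) a b := by
      rcases hmem v with hE | ⟨hI, hD⟩
      · rcases hE with hPQ | ⟨_, hQab⟩ | ⟨_, hQba⟩
        · exact absurd hPQ hPQne
        · exact hQab
        · exact absurd hQba hnq
      · exact hD
    rw [hRa, hQb]; exact hQab

/-- A compatible scf admits no manipulation at a profile where it selects `a`. -/
private lemma no_manip {a b : A} (hab : a ≠ b) {φ : Profile V A → A}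
    (hrange : Set.range φ = {a, b}) (hc : Compatible a b φ) :
    ∀ (D : Set V) (P : Profile V A), φ P = a → ¬ Manipulates φ D P := by
  intro D P hPa hman
  obtain ⟨hD, Q, hoff, hpref⟩ := hman
  obtain ⟨v0, hv0⟩ := hD
  have hQne : φ Q ≠ φ P := by
    intro heq
    have := hpref v0 hv0
    rw [heq] at this
    exact sPref_irrefl _ _ this
  have hQb : φ Q = b := by
    rcases range_cases hrange Q with h | h
    · exact absurd (h.trans hPa.symm) hQne
    · exact h
  have hDba : ∀ v ∈ D, SPref (P v) b a := by
    intro v hv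
    have := hpref v hv
    rwa [hQb, hPa] at this
  -- cond v: the problem voters (flip from b≻a in P to a≻b in Q)
  set c : V → Prop := fun v => SPref (Q v) a b ∧ SPref (P v) b a with hcdef
  have hcD : ∀ v, c v → Q v ≠ P v := fun v hv heq => (hv.2).2 (heq ▸ hv.1).1
  set S : Profile V A := fun v => if h : c v then Q v else P v with hS
  set T : Profile V A := fun v => if h : c v then topW else P v with hT
  -- Q ⊐_b S, hence φ S = b
  have hSb : φ S = b := by
    have hdom : DomB a b Q S := by
      refine (Set.eq_univ_iff_forall.mpr ?_).symm
      intro v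
      simp only [Set.mem_union, Set.mem_inter_iff, Eset, Iset, Dset, Set.mem_setOf_eq]
      by_cases hcv : c v
      · left; left; simp only [hS, dif_pos hcv]
      · -- S v = P v
        have hSv : S v = P v := by simp only [hS, dif_neg hcv]
        by_cases hvD : v ∈ D
        · have hPv : SPref (P v) b a := hDba v hvD
          have hnQab : ¬ SPref (Q v) a b := fun h => hcv ⟨h, hPv⟩
          rcases weak_cases (Q v) a b with h | h | h
          · exact absurd h hnQab
          · left; right; right
            exact ⟨h, by rw [show S v = P v from hSv]; exact hPv⟩
          · right
            refine ⟨h, ?_⟩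
            show SPref (S v) b a
            rw [hSv]; exact hPv
        · left; left
          show Q v = S v
          rw [hSv, hoff v hvD]
    have := hc Q S (Or.inr ⟨hQb, hdom⟩)
    rw [this, hQb]
  -- T ⊐_b P, so φ T ≠ b (else φ P = b); hence φ T = a
  have hTa : φ T = a := by
    rcases range_cases hrange T with h | h
    · exact h
    · exfalso
      have hdom : DomB a b T P := by
        refine (Set.eq_univ_iff_forall.mpr ?_).symm
        intro v
        simp only [Set.mem_union, Set.mem_inter_iff, Eset, Iset, Dset, Set.mem_setOf_eq]
        by_cases hcv : c v
        · right
          refine ⟨?_, hcv.2⟩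
          have hTv : T v = topW := by simp only [hT]; rw [dif_pos hcv]
          show Indiff (T v) a b
          rw [hTv]; exact ⟨trivial, trivial⟩
        · left; left
          show T v = P v
          simp only [hT]; rw [dif_neg hcv]
      have := hc T P (Or.inr ⟨h, hdom⟩)
      rw [this, h] at hPa
      exact hab hPa.symm
  -- T ⊐_a S, so φ S = φ T = a, contradiction
  have hdom : DomA a b T S := by
    refine (Set.eq_univ_iff_forall.mpr ?_).symm
    intro v
    by_cases hcv : c v
    · right
      have hTv : T v = topW := by simp only [hT]; rw [dif_pos hcv]
      have hSv : S v = Q v := by simp only [hS]; rw [dif_pos hcv]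
      constructor
      · show Indiff (T v) a b
        rw [hTv]; exact ⟨trivial, trivial⟩
      · show SPref (S v) a b
        rw [hSv]; exact hcv.1
    · left; left
      show T v = S v
      simp only [hT, hS]; rw [dif_neg hcv, dif_neg hcv]
  have := hc T S (Or.inl ⟨hTa, hdom⟩)
  rw [this, hTa] at hSb
  exact hab hSb

end Aux

/-- Theorem 2.6: an scf with range `{a,b}` is coalitionally strategy-proof iff it is
compatible with the dominance relation `⊐`. -/
theorem csp_iff_compatible (a b : A) (hab : a ≠ b)
    (φ : Profile V A → A) (hrange : Set.range φ = {a, b}) :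
    CSP φ ↔ Compatible a b φ := by
  constructor
  · intro h P Q hyp
    rcases hyp with ⟨hPa, hdom⟩ | ⟨hPb, hdom⟩
    · rw [hPa]
      exact csp_dir hab hrange h P Q hPa hdom
    · rw [hPb]
      exact csp_dir hab.symm (by rw [hrange, Set.pair_comm]) h P Q hPb
        ((domB_iff a b P Q).mp hdom)
  · intro hc D P
    rcases range_cases hrange P with hPa | hPb
    · exact no_manip hab hrange hc D P hPa
    · exact no_manip hab.symm (by rw [hrange, Set.pair_comm]) (compatible_symm hc) D P hPb
end

section
/- Let φ be a coalitionally strategy-proof social choice function defined on all profiles with range {a,b}, where a, b are distinct alternatives. Then for all profiles P, Q: if V = E(P,Q), then φ(P) = φ(Q). -/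
universe u v

variable {V : Type u} {A : Type v}

lemma csp_key (a b : A) (hab : a ≠ b)
    (φ : Profile V A → A) (hrange : Set.range φ = {a, b}) (hcsp : CSP φ)
    (P Q : Profile V A) (hE : Eset a b P Q = Set.univ)
    (hP : φ P = a) (hQ : φ Q = b) : False := by
  classical
  have hEv : ∀ v : V, P v = Q v ∨ (SPref (P v) a b ∧ SPref (Q v) a b) ∨
      (SPref (P v) b a ∧ SPref (Q v) b a) := by
    intro v
    have : v ∈ Eset a b P Q := by rw [hE]; trivial
    exact this
  set D₂ : Set V := {v | P v ≠ Q v ∧ SPref (P v) b a} with hD₂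
  set R : Profile V A := fun v => if v ∈ D₂ then Q v else P v with hR
  have hRrange : φ R ∈ ({a, b} : Set A) := by rw [← hrange]; exact ⟨R, rfl⟩
  have hRa : φ R = a := by
    rcases hRrange with h | h
    · exact h
    · exfalso
      by_cases hne : D₂.Nonempty
      · exact hcsp D₂ P ⟨hne, R, fun v hv => by simp [hR, hv],
          fun v hv => by rw [h, hP]; exact hv.2⟩
      · have : R = P := by
          funext v
          have : v ∉ D₂ := fun hv => hne ⟨v, hv⟩
          simp [hR, this]
        rw [this, hP] at h
        exact hab h
  set D₁ : Set V := {v | P v ≠ Q v ∧ SPref (P v) a b} with hD₁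
  have hRQ : ∀ v ∉ D₁, R v = Q v := by
    intro v hv
    by_cases h2 : v ∈ D₂
    · simp [hR, h2]
    · have hPQ : P v = Q v := by
        by_contra hne
        rcases hEv v with h | h | h
        · exact hne h
        · exact hv ⟨hne, h.1⟩
        · exact h2 ⟨hne, h.1⟩
      simp [hR, h2, hPQ]
  by_cases hne : D₁.Nonempty
  · refine hcsp D₁ Q ⟨hne, R, hRQ, fun v hv => ?_⟩
    rw [hRa, hQ]
    rcases hEv v with h | h | h
    · exact absurd h hv.1
    · exact h.2
    · exact absurd hv.2.1 h.1.2.elim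
  · have : R = Q := funext fun v => hRQ v (fun hv => hne ⟨v, hv⟩)
    rw [this, hQ] at hRa
    exact hab hRa.symm

/-- Corollary 2.7: if `φ` is a CSP scf with range `{a,b}` and `V = E(P,Q)`,
then `φ P = φ Q`. -/
theorem csp_equal_on_equivalence (a b : A) (hab : a ≠ b)
    (φ : Profile V A → A) (hrange : Set.range φ = {a, b}) (hcsp : CSP φ) :
    ∀ P Q : Profile V A, Eset a b P Q = Set.univ → φ P = φ Q := by
  intro P Q hE
  have hEsymm : Eset b a P Q = Set.univ := by
    ext v
    simp only [Set.mem_univ, iff_true]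
    have : v ∈ Eset a b P Q := by rw [hE]; trivial
    rcases this with h | h | h
    · exact Or.inl h
    · exact Or.inr (Or.inr h)
    · exact Or.inr (Or.inl h)
  have hrange' : Set.range φ = {b, a} := by rw [hrange, Set.pair_comm]
  have hPm : φ P ∈ ({a, b} : Set A) := by rw [← hrange]; exact ⟨P, rfl⟩
  have hQm : φ Q ∈ ({a, b} : Set A) := by rw [← hrange]; exact ⟨Q, rfl⟩
  rcases hPm with hP | hP <;> rcases hQm with hQ | hQ
  · rw [hP, hQ]
  · exact absurd (csp_key a b hab φ hrange hcsp P Q hE hP hQ) id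
  · exact absurd (csp_key b a hab.symm φ hrange' hcsp P Q hEsymm hP hQ) id
  · rw [hP, hQ]
end

section
/- Every ψ-type social choice function (associated with distinct alternatives a, b, a value x ∈ {a,b}, and a double collection with respect to {a,b}) is coalitionally strategy-proof. -/
universe u v

variable {V : Type u} {A : Type v}

/-! Suppose a coalition `D` manipulates `P` through `Q`, say with `ψ P = a` and `ψ Q = b`, so
every member of `D` strictly prefers `b` to `a` at `P`. As the ballots `π^λ_v` are indifferent
between `a` and `b`, no member of `D` lies in `I_λ` when `P ∈ 𝓟_a(π^λ, F_λ)`, and the deviation can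
only enlarge `D(a, ·)`; hence `P ∈ 𝓟_a(π^λ, F_λ)` implies `Q ∈ 𝓟_a(π^λ, F_λ)`. Undoing the
deviation can only enlarge `D(b, ·)`, so `Q ∈ 𝓟_b(π^λ, F_λ)` implies `P ∈ 𝓟_b(π^λ, F_λ)`.
Comparing the least indices of `P` and `Q` now forces `ψ Q = a`. The case `ψ P = b` is
symmetric, with the superset-closed family `F_λ°` in place of `F_λ`. -/

lemma Set.eq_empty_or_exists_isLeast {ι : Type*} [LinearOrder ι] [WellFoundedLT ι]
    (s : Set ι) : s = ∅ ∨ ∃ l, IsLeast s l :=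
  s.eq_empty_or_nonempty.imp_right fun hs =>
    ⟨_, Function.argminOn_mem id s hs, fun _ ha => Function.argminOn_le id s ha⟩

section LeastIndexChoice

variable {ι α : Type*} [LinearOrder ι]
  {SA SB : ι → Set α} {a b x : A} {ψ : α → A}

def IsLeastIndexChoice (SA SB : ι → Set α) (a b x : A) (ψ : α → A) : Prop :=
  ∀ P, (∀ l, IsLeast {l | P ∈ SA l ∪ SB l} l → (P ∈ SA l → ψ P = a) ∧ (P ∈ SB l → ψ P = b)) ∧
    ({l | P ∈ SA l ∪ SB l} = ∅ → ψ P = x)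

lemma IsLeastIndexChoice.symm (hψ : IsLeastIndexChoice SA SB a b x ψ) :
    IsLeastIndexChoice SB SA b a x ψ := by
  intro P
  simp only [Set.union_comm (SB _)]
  exact ⟨fun l hl => ((hψ P).1 l hl).symm, (hψ P).2⟩

lemma IsLeastIndexChoice.eq_or_eq [WellFoundedLT ι] (hψ : IsLeastIndexChoice SA SB a b x ψ)
    (hx : x = a ∨ x = b) (P : α) : ψ P = a ∨ ψ P = b := by
  obtain hP | ⟨l, hl⟩ := Set.eq_empty_or_exists_isLeast {l | P ∈ SA l ∪ SB l}
  · exact (hψ P).2 hP ▸ hx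
  · exact hl.1.imp ((hψ P).1 l hl).1 ((hψ P).1 l hl).2

lemma IsLeastIndexChoice.mem_left_of_eq (hψ : IsLeastIndexChoice SA SB a b x ψ) (hab : a ≠ b)
    {P : α} {l : ι} (hl : IsLeast {l | P ∈ SA l ∪ SB l} l) (hP : ψ P = a) : P ∈ SA l :=
  hl.1.resolve_right fun hB => hab (hP.symm.trans (((hψ P).1 l hl).2 hB))

theorem IsLeastIndexChoice.eq_of_transfer [WellFoundedLT ι]
    (hψ : IsLeastIndexChoice SA SB a b x ψ) (hab : a ≠ b) {P Q : α}
    (hA : ∀ l, P ∈ SA l → Q ∈ SA l) (hB : ∀ l, Q ∈ SB l → P ∈ SB l) (hP : ψ P = a) :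
    ψ Q = a := by
  obtain hQ | ⟨m, hm⟩ := Set.eq_empty_or_exists_isLeast {l | Q ∈ SA l ∪ SB l}
  · obtain hP' | ⟨l, hl⟩ := Set.eq_empty_or_exists_isLeast {l | P ∈ SA l ∪ SB l}
    · rw [(hψ Q).2 hQ, ← (hψ P).2 hP', hP]
    · exact absurd (Or.inl (hA l (hψ.mem_left_of_eq hab hl hP))) (hQ.subset ·)
  rcases hm.1 with hQA | hQB
  · exact ((hψ Q).1 m hm).1 hQA
  obtain ⟨l, hl⟩ := (Set.eq_empty_or_exists_isLeast {l | P ∈ SA l ∪ SB l}).resolve_left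
    (Set.nonempty_iff_ne_empty.mp ⟨m, Or.inr (hB m hQB)⟩)
  have hlm : l = m :=
    le_antisymm (hl.2 (Or.inr (hB m hQB))) (hm.2 (Or.inl (hA l (hψ.mem_left_of_eq hab hl hP))))
  exact absurd (hP.symm.trans (((hψ P).1 l hl).2 (hlm ▸ hB m hQB))) hab

end LeastIndexChoice

def UpClosedIn (W : Set V) (G : Set (Set V)) : Prop :=
  ∀ E₁ E₂ : Set V, E₁ ∈ G → E₁ ⊆ E₂ → E₂ ⊆ W → E₂ ∈ G

lemma SSCF.upClosedIn {W : Set V} {F : Set (Set V)} (hF : SSCF W F) : UpClosedIn W F := hF.2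

lemma UpClosedIn.dualF {W : Set V} {F : Set (Set V)} (hF : UpClosedIn W F) :
    UpClosedIn W (dualF W F) := fun _ _ hE hsub hW =>
  ⟨hW, fun h => hE.2 (hF _ _ h (Set.sdiff_subset_sdiff_right hsub) Set.sdiff_subset)⟩

/-- With `G = F` this is `𝓟_a(π, F)`; with `a` and `b` swapped and `G = F°` it is `𝓟_b(π, F)`. -/
def PrefClass (a b : A) (I : Set V) (pc : V → WeakOrd A) (G : Set (Set V)) :
    Set (Profile V A) :=
  {P | Dset a b P ∩ Iᶜ ∈ G ∧ ∀ v ∈ I, P v = pc v ∨ SPref (P v) a b}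

section PrefClass

variable {a b : A} {I : Set V} {pc : V → WeakOrd A} {G : Set (Set V)} {D : Set V}
  {P Q : Profile V A}

lemma mem_prefClass_of_opponents_deviate (hpc : ∀ v ∈ I, Indiff (pc v) a b)
    (hG : UpClosedIn Iᶜ G) (hQP : ∀ v ∉ D, Q v = P v) (hD : ∀ v ∈ D, SPref (P v) b a)
    (hP : P ∈ PrefClass a b I pc G) : Q ∈ PrefClass a b I pc G := by
  have hDa : ∀ v ∈ D, ¬ (P v).1 a b := fun v hv => (hD v hv).2
  have hID : ∀ v ∈ I, v ∉ D := fun v hvI hvD => by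
    rcases hP.2 v hvI with h | h
    · exact hDa v hvD (h ▸ (hpc v hvI).1)
    · exact hDa v hvD h.1
  have hsub : Dset a b P ∩ Iᶜ ⊆ Dset a b Q ∩ Iᶜ := fun v hv => by
    have hvD : v ∉ D := fun hvD => hDa v hvD hv.1.1
    exact ⟨show SPref (Q v) a b from hQP v hvD ▸ hv.1, hv.2⟩
  exact ⟨hG _ _ hP.1 hsub Set.inter_subset_right, fun v hv => hQP v (hID v hv) ▸ hP.2 v hv⟩

lemma mem_prefClass_of_supporters_revert (hG : UpClosedIn Iᶜ G) (hQP : ∀ v ∉ D, Q v = P v)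
    (hD : ∀ v ∈ D, SPref (P v) a b) (hQ : Q ∈ PrefClass a b I pc G) :
    P ∈ PrefClass a b I pc G := by
  have hsub : Dset a b Q ∩ Iᶜ ⊆ Dset a b P ∩ Iᶜ := fun v hv => by
    by_cases hvD : v ∈ D
    · exact ⟨hD v hvD, hv.2⟩
    · exact ⟨show SPref (P v) a b from hQP v hvD ▸ hv.1, hv.2⟩
  refine ⟨hG _ _ hQ.1 hsub Set.inter_subset_right, fun v hv => ?_⟩
  by_cases hvD : v ∈ D
  · exact Or.inr (hD v hvD)
  · exact hQP v hvD ▸ hQ.2 v hv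

end PrefClass

lemma SPref.ne {W : WeakOrd A} {x y : A} (h : SPref W x y) : x ≠ y := fun e => h.2 (e ▸ h.1)

section DoubleCollection

variable {a b x : A} {β : Ordinal.{max u v}} {I : Ordinal.{max u v} → Set V}
  {pc : Ordinal.{max u v} → V → WeakOrd A} {F : Ordinal.{max u v} → Set (Set V)}

def ClassABelow (a b : A) (β : Ordinal.{max u v}) (I : Ordinal.{max u v} → Set V)
    (pc : Ordinal.{max u v} → V → WeakOrd A) (F : Ordinal.{max u v} → Set (Set V))
    (l : Ordinal.{max u v}) : Set (Profile V A) :=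
  {P | l < β ∧ P ∈ ClassA a b (I l) (pc l) (F l)}

def ClassBBelow (a b : A) (β : Ordinal.{max u v}) (I : Ordinal.{max u v} → Set V)
    (pc : Ordinal.{max u v} → V → WeakOrd A) (F : Ordinal.{max u v} → Set (Set V))
    (l : Ordinal.{max u v}) : Set (Profile V A) :=
  {P | l < β ∧ P ∈ ClassB a b (I l) (pc l) (F l)}

lemma IsPsiOf.isLeastIndexChoice {ψ : Profile V A → A} (hψ : IsPsiOf a b x β I pc F ψ) :
    IsLeastIndexChoice (ClassABelow a b β I pc F) (ClassBBelow a b β I pc F) a b x ψ := by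
  intro P
  have hidx : {l | P ∈ ClassABelow a b β I pc F l ∪ ClassBBelow a b β I pc F l} =
      idxSet a b β I pc F P := Set.ext fun _ => and_or_left.symm
  rw [hidx]
  exact ⟨fun l hl => ⟨fun hA => ((hψ P).1 l hl).1 hA.2, fun hB => ((hψ P).1 l hl).2 hB.2⟩,
    (hψ P).2⟩

variable {D : Set V} {P Q : Profile V A}

lemma IsDoubleCollection.mem_classABelow_of_opponents_deviate
    (hDC : IsDoubleCollection a b β I pc F) (hQP : ∀ v ∉ D, Q v = P v)
    (hD : ∀ v ∈ D, SPref (P v) b a) {l : Ordinal.{max u v}}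
    (hP : P ∈ ClassABelow a b β I pc F l) :
    Q ∈ ClassABelow a b β I pc F l :=
  ⟨hP.1, mem_prefClass_of_opponents_deviate (hDC.2 l hP.1).1 (hDC.2 l hP.1).2.upClosedIn hQP hD
    hP.2⟩

lemma IsDoubleCollection.mem_classBBelow_of_opponents_deviate
    (hDC : IsDoubleCollection a b β I pc F) (hQP : ∀ v ∉ D, Q v = P v)
    (hD : ∀ v ∈ D, SPref (P v) a b) {l : Ordinal.{max u v}}
    (hP : P ∈ ClassBBelow a b β I pc F l) :
    Q ∈ ClassBBelow a b β I pc F l :=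
  ⟨hP.1, mem_prefClass_of_opponents_deviate (fun v hv => ((hDC.2 l hP.1).1 v hv).symm)
    (hDC.2 l hP.1).2.upClosedIn.dualF hQP hD hP.2⟩

lemma IsDoubleCollection.mem_classABelow_of_supporters_revert
    (hDC : IsDoubleCollection a b β I pc F) (hQP : ∀ v ∉ D, Q v = P v)
    (hD : ∀ v ∈ D, SPref (P v) a b) {l : Ordinal.{max u v}}
    (hQ : Q ∈ ClassABelow a b β I pc F l) :
    P ∈ ClassABelow a b β I pc F l :=
  ⟨hQ.1, mem_prefClass_of_supporters_revert (hDC.2 l hQ.1).2.upClosedIn hQP hD hQ.2⟩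

lemma IsDoubleCollection.mem_classBBelow_of_supporters_revert
    (hDC : IsDoubleCollection a b β I pc F) (hQP : ∀ v ∉ D, Q v = P v)
    (hD : ∀ v ∈ D, SPref (P v) b a) {l : Ordinal.{max u v}}
    (hQ : Q ∈ ClassBBelow a b β I pc F l) :
    P ∈ ClassBBelow a b β I pc F l :=
  ⟨hQ.1, mem_prefClass_of_supporters_revert (hDC.2 l hQ.1).2.upClosedIn.dualF hQP hD hQ.2⟩

end DoubleCollection

/-- Theorem 4.4: every ψ-type social choice function is coalitionally strategy-proof. -/
theorem psi_type_is_csp (a b x : A) (hab : a ≠ b) (hx : x = a ∨ x = b)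
    (β : Ordinal.{max u v}) (I : Ordinal.{max u v} → Set V)
    (pc : Ordinal.{max u v} → V → WeakOrd A) (F : Ordinal.{max u v} → Set (Set V))
    (hDC : IsDoubleCollection a b β I pc F)
    (ψ : Profile V A → A) (hψ : IsPsiOf a b x β I pc F ψ) :
    CSP ψ := by
  rintro D P ⟨⟨v₀, hv₀⟩, Q, hQP, hpref⟩
  have hχ := hψ.isLeastIndexChoice
  have hne : ψ Q ≠ ψ P := (hpref v₀ hv₀).ne
  rcases hχ.eq_or_eq hx P with hP | hP <;> rcases hχ.eq_or_eq hx Q with hQ | hQ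
  · exact hne (hQ.trans hP.symm)
  · have hD : ∀ v ∈ D, SPref (P v) b a := fun v hv => hP ▸ hQ ▸ hpref v hv
    refine hab ((hχ.eq_of_transfer hab (fun _ => ?_) (fun _ => ?_) hP).symm.trans hQ)
    · exact hDC.mem_classABelow_of_opponents_deviate hQP hD
    · exact hDC.mem_classBBelow_of_supporters_revert hQP hD
  · have hD : ∀ v ∈ D, SPref (P v) a b := fun v hv => hP ▸ hQ ▸ hpref v hv
    refine hab (hQ.symm.trans (hχ.symm.eq_of_transfer hab.symm (fun _ => ?_) (fun _ => ?_) hP))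
    · exact hDC.mem_classBBelow_of_opponents_deviate hQP hD
    · exact hDC.mem_classABelow_of_supporters_revert hQP hD
  · exact hne (hQ.trans hP.symm)
end

section
/- Let ψ be the ψ-type social choice function associated with x ∈ {a,b} and a double collection ⟨(π^λ)_{λ∈Λ}, (F_λ)_{λ∈Λ}⟩ with respect to {a,b}. Suppose P ⊐_b Q (i.e., V = E(P,Q) ∪ (I(P) ∩ D(b,Q))). Then: (Claim 1) if λ(P) < ∞ and ψ(P) = b, then Q ∈ 𝓟_b(π^{λ(P)}, F_{λ(P)}); and (Claim 2) if λ(Q) < ∞ and ψ(Q) = a, then P ∈ 𝓟_a(π^{λ(Q)}, F_{λ(Q)}). -/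
universe u v

variable {V : Type u} {A : Type v}

/-- Claims 1 and 2 in the proof of Theorem 4.4. Suppose `P ⊐_b Q`. Then:
(Claim 1) if `λ(P) < ∞` and `ψ P = b`, then `Q ∈ 𝓟_b(π^{λ(P)}, F_{λ(P)})`;
(Claim 2) if `λ(Q) < ∞` and `ψ Q = a`, then `P ∈ 𝓟_a(π^{λ(Q)}, F_{λ(Q)})`. -/
theorem psi_claims (a b x : A) (hab : a ≠ b) (hx : x = a ∨ x = b)
    (β : Ordinal.{max u v}) (I : Ordinal.{max u v} → Set V)
    (pc : Ordinal.{max u v} → V → WeakOrd A) (F : Ordinal.{max u v} → Set (Set V))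
    (hDC : IsDoubleCollection a b β I pc F)
    (ψ : Profile V A → A) (hψ : IsPsiOf a b x β I pc F ψ)
    (P Q : Profile V A) (hdom : DomB a b P Q) :
    (∀ l, IsLeast (idxSet a b β I pc F P) l → ψ P = b →
      Q ∈ ClassB a b (I l) (pc l) (F l)) ∧
    (∀ l, IsLeast (idxSet a b β I pc F Q) l → ψ Q = a →
      P ∈ ClassA a b (I l) (pc l) (F l)) := by
  have hdom' : ∀ v : V,
      (P v = Q v ∨ (SPref (P v) a b ∧ SPref (Q v) a b) ∨ (SPref (P v) b a ∧ SPref (Q v) b a))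
      ∨ (Indiff (P v) a b ∧ SPref (Q v) b a) := by
    intro v
    have h : v ∈ Eset a b P Q ∪ (Iset a b P ∩ Dset b a Q) := by
      rw [DomB] at hdom
      exact hdom ▸ Set.mem_univ v
    exact h
  constructor
  · -- Claim 1
    intro l hl hpb
    obtain ⟨hlβ, hP⟩ := hl.1
    have hspec := (hψ P).1 l hl
    have hPB : P ∈ ClassB a b (I l) (pc l) (F l) := by
      rcases hP with h | h
      · exact absurd ((hspec.1 h).symm.trans hpb) hab
      · exact h
    obtain ⟨hDC1, hDC2⟩ := hDC.2 l hlβ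
    obtain ⟨hPd, hPi⟩ := hPB
    have Dsub : Dset b a P ⊆ Dset b a Q := by
      intro v hv
      rcases hdom' v with (hE | ⟨h1, _⟩ | ⟨_, h2⟩) | ⟨_, h2⟩
      · exact show SPref (Q v) b a from hE ▸ hv
      · exact absurd h1.1 hv.2
      · exact h2
      · exact h2
    refine ⟨⟨Set.inter_subset_right, ?_⟩, ?_⟩
    · intro hmem
      refine hPd.2 (hDC2.2 _ _ hmem ?_ Set.diff_subset)
      intro v hvv
      refine ⟨hvv.1, fun hc => hvv.2 ⟨Dsub hc.1, hvv.1⟩⟩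
    · intro v hv
      rcases hPi v hv with heq | hs
      · have hind : Indiff (P v) a b := heq ▸ hDC1 v hv
        rcases hdom' v with (hE | ⟨h1, _⟩ | ⟨h1, _⟩) | ⟨_, h2⟩
        · exact Or.inl (hE ▸ heq)
        · exact absurd hind.2 h1.2
        · exact absurd hind.1 h1.2
        · exact Or.inr h2
      · rcases hdom' v with (hE | ⟨h1, _⟩ | ⟨_, h2⟩) | ⟨hind, _⟩
        · exact Or.inr (hE ▸ hs)
        · exact absurd h1.1 hs.2
        · exact Or.inr h2
        · exact absurd hind.1 hs.2
  · -- Claim 2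
    intro l hl hqa
    obtain ⟨hlβ, hQ⟩ := hl.1
    have hspec := (hψ Q).1 l hl
    have hQA : Q ∈ ClassA a b (I l) (pc l) (F l) := by
      rcases hQ with h | h
      · exact h
      · exact absurd (hqa.symm.trans (hspec.2 h)) hab
    obtain ⟨hDC1, hDC2⟩ := hDC.2 l hlβ
    obtain ⟨hQd, hQi⟩ := hQA
    have Dsub : Dset a b Q ⊆ Dset a b P := by
      intro v hv
      rcases hdom' v with (hE | ⟨h1, _⟩ | ⟨_, h2⟩) | ⟨_, h2⟩
      · exact show SPref (P v) a b from hE ▸ hv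
      · exact h1
      · exact absurd h2.1 hv.2
      · exact absurd h2.1 hv.2
    have hQnotb : ∀ v ∈ I l, ¬ SPref (Q v) b a := by
      intro v hv hc
      rcases hQi v hv with heq | hs
      · have hind : Indiff (Q v) a b := heq ▸ hDC1 v hv
        exact hc.2 hind.1
      · exact hs.2 hc.1
    refine ⟨?_, ?_⟩
    · exact hDC2.2 _ _ hQd (fun v hv => ⟨Dsub hv.1, hv.2⟩) Set.inter_subset_right
    · intro v hv
      rcases hdom' v with (hE | ⟨h1, _⟩ | ⟨_, h2⟩) | ⟨_, h2⟩
      · rcases hQi v hv with heq | hs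
        · exact Or.inl (hE.trans heq)
        · exact Or.inr (hE ▸ hs)
      · exact Or.inr h1
      · exact absurd h2 (hQnotb v hv)
      · exact absurd h2 (hQnotb v hv)
end

section
/- Let φ be a coalitionally strategy-proof social choice function defined on all profiles with range {a,b}, where a, b are distinct alternatives. Let F be a nonempty superset-closed family of coalitions (not containing the empty set) such that for every strict profile P: φ(P) = a if and only if D(a,P) ∈ F. Then for every (not necessarily strict) profile P: D(a,P) ∈ F implies φ(P) = a, and D(b,P) ∈ F° implies φ(P) = b. -/
universe u v

variable {V : Type u} {A : Type v}

open scoped Classical in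
/-- Rank used to build strict orders: `a` first, `b` second, everything else after. -/
noncomputable def rkAB (a b x : A) : ℕ := if x = a then 0 else if x = b then 1 else 2

/-- An auxiliary linear order on `A` for tie-breaking. -/
noncomputable def lA (A : Type v) : LinearOrder A := by
  classical exact linearOrderOfSTO WellOrderingRel

/-- A strict (linear) weak order with `a ≻ b ≻ everything else`. -/
noncomputable def wOrd (a b : A) : WeakOrd A := by
  letI := lA A
  refine ⟨fun x y => rkAB a b x < rkAB a b y ∨ (rkAB a b x = rkAB a b y ∧ x ≤ y),
    fun x y => ?_, fun x y z hxy hyz => ?_⟩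
  · rcases lt_trichotomy (rkAB a b x) (rkAB a b y) with h | h | h
    · exact Or.inl (Or.inl h)
    · rcases le_total x y with h' | h'
      · exact Or.inl (Or.inr ⟨h, h'⟩)
      · exact Or.inr (Or.inr ⟨h.symm, h'⟩)
    · exact Or.inr (Or.inl h)
  · rcases hxy with h1 | ⟨h1, h1'⟩ <;> rcases hyz with h2 | ⟨h2, h2'⟩
    · exact Or.inl (lt_trans h1 h2)
    · exact Or.inl (h2 ▸ h1)
    · exact Or.inl (h1 ▸ h2)
    · exact Or.inr ⟨h1.trans h2, le_trans h1' h2'⟩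

lemma wOrd_anti (a b : A) : AntiSymmetric (wOrd a b).1 := by
  letI := lA A
  rintro x y (h1 | ⟨h1, h1'⟩) (h2 | ⟨h2, h2'⟩)
  · omega
  · omega
  · omega
  · exact le_antisymm h1' h2'

lemma sPref_wOrd {a b : A} (hab : a ≠ b) : SPref (wOrd a b) a b := by
  have h : rkAB a b a < rkAB a b b := by
    simp [rkAB, Ne.symm hab]
  refine ⟨Or.inl h, ?_⟩
  rintro (h' | ⟨h', -⟩) <;> omega

lemma not_sPref_wOrd {a b : A} (hab : a ≠ b) : ¬ SPref (wOrd a b) b a :=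
  fun hs => (sPref_wOrd hab).2 hs.1

/-- The implications `(+)` and `(++)` in the proof of Proposition 5.1: if `F` is the
committee representing `φ` on strict profiles, then for every (not necessarily strict)
profile `P`, `D(a,P) ∈ F` implies `φ P = a` and `D(b,P) ∈ F°` implies `φ P = b`. -/
theorem committee_extends_to_weak_profiles (a b : A) (hab : a ≠ b)
    (φ : Profile V A → A) (hrange : Set.range φ = {a, b}) (hcsp : CSP φ)
    (F : Set (Set V)) (hne : F.Nonempty) (hemp : ∅ ∉ F)
    (hclosed : ∀ E₁ E₂ : Set V, E₁ ∈ F → E₁ ⊆ E₂ → E₂ ∈ F)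
    (hstrict : ∀ P : Profile V A, (∀ v, AntiSymmetric (P v).1) →
      (φ P = a ↔ Dset a b P ∈ F)) :
    ∀ P : Profile V A,
      (Dset a b P ∈ F → φ P = a) ∧
      (Dset b a P ∈ dualF Set.univ F → φ P = b) := by
  classical
  intro P
  have hmem : ∀ Q : Profile V A, φ Q = a ∨ φ Q = b := by
    intro Q
    have h : φ Q ∈ Set.range φ := Set.mem_range_self Q
    rw [hrange] at h
    simpa using h
  constructor
  · -- (+) : D(a,P) ∈ F → φ P = a
    intro hD
    have hDne : (Dset a b P).Nonempty := by
      rw [Set.nonempty_iff_ne_empty]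
      intro h; rw [h] at hD; exact hemp hD
    set R : Profile V A := fun v => if v ∈ Dset a b P then wOrd a b else P v with hR
    set Q : Profile V A := fun v => if v ∈ Dset a b P then wOrd a b else wOrd b a with hQ
    have hQstrict : ∀ v, AntiSymmetric (Q v).1 := by
      intro v
      rw [hQ]
      by_cases h : v ∈ Dset a b P <;> simp only [h, if_true, if_false] <;>
        exact wOrd_anti _ _
    have hDQ : Dset a b Q = Dset a b P := by
      ext v
      show SPref (Q v) a b ↔ v ∈ Dset a b P
      simp only [hQ]
      by_cases h : v ∈ Dset a b P
      · rw [if_pos h]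
        exact iff_of_true (sPref_wOrd hab) h
      · rw [if_neg h]
        exact iff_of_false (not_sPref_wOrd hab.symm) h
    have hφQ : φ Q = a := by
      rw [hstrict Q hQstrict, hDQ]; exact hD
    have hφR : φ R = a := by
      by_contra hne'
      have hb : φ R = b := (hmem R).resolve_left hne'
      set S : Set V := {v | R v ≠ Q v} with hS
      rcases Set.eq_empty_or_nonempty S with hSe | hSne
      · have hRQ : R = Q := by
          funext v
          by_contra hc
          have : v ∈ S := hc
          rw [hSe] at this
          exact this
        rw [hRQ, hφQ] at hb
        exact hab hb
      · refine hcsp S Q ⟨hSne, R, fun v hv => not_not.mp hv, fun v hv => ?_⟩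
        have hvD : v ∉ Dset a b P := by
          intro hvD
          apply hv
          show R v = Q v
          rw [hR, hQ]
          simp [hvD]
        have hQv : Q v = wOrd b a := by rw [hQ]; simp [hvD]
        rw [hb, hφQ, hQv]
        exact sPref_wOrd hab.symm
    by_contra hne'
    have hb : φ P = b := (hmem P).resolve_left hne'
    refine hcsp (Dset a b P) P ⟨hDne, R, fun v hv => ?_, fun v hv => ?_⟩
    · rw [hR]; simp [hv]
    · rw [hφR, hb]; exact hv
  · -- (++) : D(b,P) ∈ F° → φ P = b
    rintro ⟨-, hnF⟩
    have huniv : (Set.univ : Set V) ∈ F := by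
      obtain ⟨E, hE⟩ := hne
      exact hclosed E Set.univ hE (Set.subset_univ E)
    have hDne : (Dset b a P).Nonempty := by
      rw [Set.nonempty_iff_ne_empty]
      intro h
      apply hnF
      rw [h]
      simpa using huniv
    set R : Profile V A := fun v => if v ∈ Dset b a P then wOrd b a else P v with hR
    set Q : Profile V A := fun v => if v ∈ Dset b a P then wOrd b a else wOrd a b with hQ
    have hQstrict : ∀ v, AntiSymmetric (Q v).1 := by
      intro v
      rw [hQ]
      by_cases h : v ∈ Dset b a P <;> simp only [h, if_true, if_false] <;>
        exact wOrd_anti _ _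
    have hDQ : Dset a b Q = (Dset b a P)ᶜ := by
      ext v
      show SPref (Q v) a b ↔ v ∈ (Dset b a P)ᶜ
      simp only [hQ, Set.mem_compl_iff]
      by_cases h : v ∈ Dset b a P
      · rw [if_pos h]
        exact iff_of_false (not_sPref_wOrd hab.symm) (by simpa using h)
      · rw [if_neg h]
        exact iff_of_true (sPref_wOrd hab) (by simpa using h)
    have hφQ : φ Q = b := by
      rcases hmem Q with h | h
      · exfalso
        apply hnF
        have := (hstrict Q hQstrict).mp h
        rw [hDQ] at this
        rwa [← Set.compl_eq_univ_diff]
      · exact h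
    have hφR : φ R = b := by
      by_contra hne'
      have hA : φ R = a := (hmem R).resolve_right hne'
      set S : Set V := {v | R v ≠ Q v} with hS
      rcases Set.eq_empty_or_nonempty S with hSe | hSne
      · have hRQ : R = Q := by
          funext v
          by_contra hc
          have : v ∈ S := hc
          rw [hSe] at this
          exact this
        rw [hRQ, hφQ] at hA
        exact hab hA.symm
      · refine hcsp S Q ⟨hSne, R, fun v hv => not_not.mp hv, fun v hv => ?_⟩
        have hvD : v ∉ Dset b a P := by
          intro hvD
          apply hv
          show R v = Q v
          rw [hR, hQ]
          simp [hvD]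
        have hQv : Q v = wOrd a b := by rw [hQ]; simp [hvD]
        rw [hA, hφQ, hQv]
        exact sPref_wOrd hab
    by_contra hne'
    have ha : φ P = a := (hmem P).resolve_right hne'
    refine hcsp (Dset b a P) P ⟨hDne, R, fun v hv => ?_, fun v hv => ?_⟩
    · rw [hR]; simp [hv]
    · rw [hφR, ha]; exact hv
end

section
/- Let φ be a coalitionally strategy-proof social choice function defined on all profiles with range {a,b}, where a, b are distinct alternatives. Let Q be a profile with φ(Q) = a, let I = I(Q) be nonempty, and let π = (Q_v)_{v∈I}. Suppose that φ([π, R]) = a for every assignment R of weak orderings to the voters in I^c = V∖I (i.e., the restriction of φ obtained by fixing the preferences of the voters in I to π never takes the value b). Then every profile P such that, for every v ∈ I, either P_v = Q_v or a ≻_{P_v} b, satisfies φ(P) = a. -/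
universe u v

variable {V : Type u} {A : Type v}

/-- The inclusion `(⋄)` in the proof of Lemma 6.1: if `φ Q = a`, `I = I(Q)` is nonempty
and the restriction of `φ` obtained by fixing the preferences of the voters of `I` to
those of `Q` never takes the value `b` (it always gives `a`), then every profile `P`
with `P_v = Q_v` or `a ≻_{P_v} b` for each `v ∈ I` satisfies `φ P = a`. -/
theorem restriction_constant_implies_classA_value (a b : A) (hab : a ≠ b)
    (φ : Profile V A → A) (hrange : Set.range φ = {a, b}) (hcsp : CSP φ)
    (Q : Profile V A) (hQ : φ Q = a) (hI : (Iset a b Q).Nonempty)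
    (hfix : ∀ R : Profile V A, (∀ v ∈ Iset a b Q, R v = Q v) → φ R = a) :
    ∀ P : Profile V A,
      (∀ v ∈ Iset a b Q, P v = Q v ∨ SPref (P v) a b) → φ P = a := by
  intro P hP
  by_contra hne
  have hmem : φ P ∈ ({a, b} : Set A) := hrange ▸ Set.mem_range_self P
  have hPb : φ P = b := by rcases hmem with h | h <;> simp_all
  set D : Set V := {v | v ∈ Iset a b Q ∧ P v ≠ Q v} with hD
  classical
  set R : Profile V A := fun v => if v ∈ Iset a b Q then Q v else P v with hR
  have hRa : φ R = a := hfix R (fun v hv => by simp [hR, hv])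
  rcases Set.eq_empty_or_nonempty D with hDe | hDne
  · have : ∀ v ∈ Iset a b Q, P v = Q v := by
      intro v hv
      by_contra h
      exact Set.notMem_empty v (hDe ▸ (⟨hv, h⟩ : v ∈ D))
    exact hne (hfix P this)
  · refine hcsp D P ⟨hDne, R, ?_, ?_⟩
    · intro v hv
      by_cases hvI : v ∈ Iset a b Q
      · have : P v = Q v := by
          by_contra h; exact hv ⟨hvI, h⟩
        simp [hR, hvI, this]
      · simp [hR, hvI]
    · intro v hv
      rcases hP v hv.1 with h | h
      · exact absurd h hv.2
      · rw [hRa, hPb]; exact h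
end

section
/- Let φ be a coalitionally strategy-proof social choice function defined on all profiles whose range is {a,b} ⊆ A of cardinality two. Let π be a profile of unanimous indifference between a and b, and set x = φ(π). Then there exists a double collection ⟨(π^λ)_{0≤λ<β}, (F_λ)_{0≤λ<β}⟩ with respect to {a,b} such that φ coincides with the ψ-type function associated with x and this double collection; moreover, the families F₀ and its dual F₀° are both nonempty (they consist of coalitions), and the ordinal β is finite whenever both V and A are finite. -/
universe u v

variable {V : Type u} {A : Type v}

/-!
Give every profile `Q` its own level: domain the voters indifferent between `a` and `b` at `Q`,
partial profile `Q` itself, and as family the coalitions that force `φ Q` on all profiles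
obtained from `Q` by moving voters towards `φ Q` (or the dual family, when `φ Q = b`).
Every profile lies in its own class, and coalitional strategy-proofness makes every class
sound through a single monotonicity property (`CSP.eq_of_favours`).  An extra level `0` has
empty domain; there, by the same monotonicity and since `φ` is onto `{a, b}`, the family and
its dual both contain all voters but not the empty coalition.
-/

theorem spref_of_not_indiff {a b : A} (W : WeakOrd A) (hind : ¬ Indiff W a b)
    (hba : ¬ SPref W b a) : SPref W a b := by
  rcases W.2.1 a b with h | h
  · exact ⟨h, fun h' => hind ⟨h, h'⟩⟩
  · exact (hind ⟨by_contra fun h' => hba ⟨h, h'⟩, h⟩).elim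

theorem CSP.exists_not_spref {φ : Profile V A → A} (hcsp : CSP φ) {P R : Profile V A}
    (h : φ R ≠ φ P) : ∃ v, R v ≠ P v ∧ ¬ SPref (P v) (φ R) (φ P) := by
  by_contra! hall
  refine hcsp {v | R v ≠ P v} P ⟨?_, R, fun v hv => not_not.1 hv, hall⟩
  by_contra hempty
  exact h (congrArg φ (funext fun v => by_contra fun hv => hempty ⟨v, hv⟩))

def Conforms (a b : A) (I : Set V) (pc : V → WeakOrd A) (P : Profile V A) : Prop :=
  ∀ v ∈ I, P v = pc v ∨ SPref (P v) a b

theorem CSP.eq_of_favours {a b : A} (hab : a ≠ b) {φ : Profile V A → A} (hcsp : CSP φ)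
    (hφ : ∀ P, φ P = a ∨ φ P = b) {I : Set V} {pc : V → WeakOrd A} {P Q : Profile V A}
    (hP : Conforms b a I pc P) (hQ : Conforms a b I pc Q) (hQb : φ Q = b)
    (hPQ : ∀ v ∉ I, ¬ SPref (P v) b a → SPref (Q v) a b) : φ P = b := by
  classical
  refine (hφ P).resolve_left fun hPa => ?_
  let D : Set V := {v | SPref (P v) b a ∧ (v ∈ I → P v ≠ pc v)}
  have hD : ∀ v ∈ D, SPref (P v) b a := fun v hv => hv.1
  have hDc : ∀ v ∉ D, P v = Q v ∨ SPref (Q v) a b := by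
    intro v hv
    by_cases hvI : v ∈ I
    · have hPv : P v = pc v := by_contra fun hne =>
        hv ⟨(hP v hvI).resolve_left hne, fun _ => hne⟩
      exact (hQ v hvI).imp (fun h => hPv.trans h.symm) id
    · exact Or.inr (hPQ v hvI fun h => hv ⟨h, fun h' => (hvI h').elim⟩)
  -- `D` moves from `P` to `Q`; whichever value `φ` takes at the mixed profile, some
  -- coalition gains by the move
  let R : Profile V A := fun v => if v ∈ D then Q v else P v
  rcases hφ R with hRa | hRb
  · obtain ⟨v, hv, hgain⟩ := hcsp.exists_not_spref (P := Q) (R := R) (by rwa [hRa, hQb])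
    have hvD : v ∉ D := fun h => hv (if_pos h)
    rw [hRa, hQb] at hgain
    exact (hDc v hvD).elim (fun h => hv ((if_neg hvD).trans h)) hgain
  · obtain ⟨v, hv, hgain⟩ := hcsp.exists_not_spref (P := P) (R := R)
      (by rw [hRb, hPa]; exact hab.symm)
    rw [hRb, hPa] at hgain
    exact hgain (hD v (by_contra fun h => hv (if_neg h)))

theorem SSCF.dual {W : Set V} {F : Set (Set V)} (hF : SSCF W F) : SSCF W (dualF W F) :=
  ⟨fun _ hE => hE.1, fun _ _ h₁ h₁₂ h₂ => ⟨h₂, fun hmem =>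
    h₁.2 (hF.2 _ _ hmem (Set.sdiff_subset_sdiff_right h₁₂) Set.sdiff_subset)⟩⟩

theorem dualF_dualF {W : Set V} {F : Set (Set V)} (hF : ∀ E ∈ F, E ⊆ W) :
    dualF W (dualF W F) = F := by
  ext E
  simp only [dualF, Set.mem_ofPred_eq, Set.sdiff_subset, true_and, not_not]
  constructor
  · rintro ⟨hE, hmem⟩
    rwa [Set.sdiff_sdiff_cancel_left hE] at hmem
  · intro hE
    exact ⟨hF E hE, by rwa [Set.sdiff_sdiff_cancel_left (hF E hE)]⟩

theorem self_mem_dualF {W : Set V} {F : Set (Set V)} (h : ∅ ∉ F) : W ∈ dualF W F :=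
  ⟨subset_rfl, by rwa [Set.sdiff_self]⟩

theorem empty_notMem_dualF {W : Set V} {F : Set (Set V)} (h : W ∈ F) : ∅ ∉ dualF W F :=
  fun hE => hE.2 (by rwa [Set.sdiff_empty])

def winningFamily (φ : Profile V A → A) (a b : A) (I : Set V) (pc : V → WeakOrd A) :
    Set (Set V) :=
  {E | E ⊆ Iᶜ ∧ ∀ P, Conforms a b I pc P → E ⊆ Dset a b P → φ P = a}

section WinningFamily

variable {φ : Profile V A → A} {a b : A} {I : Set V} {pc : V → WeakOrd A} {P : Profile V A}

theorem sscf_winningFamily : SSCF Iᶜ (winningFamily φ a b I pc) :=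
  ⟨fun _ hE => hE.1, fun _ _ h₁ h₁₂ h₂ => ⟨h₂, fun P hP hsub => h₁.2 P hP (h₁₂.trans hsub)⟩⟩

theorem eq_of_mem_classA_winningFamily (hP : P ∈ ClassA a b I pc (winningFamily φ a b I pc)) :
    φ P = a :=
  hP.1.2 P hP.2 Set.inter_subset_left

theorem eq_of_mem_classB_winningFamily (hab : a ≠ b) (hcsp : CSP φ)
    (hφ : ∀ P, φ P = a ∨ φ P = b) (hP : P ∈ ClassB a b I pc (winningFamily φ a b I pc)) :
    φ P = b := by
  obtain ⟨⟨-, hlose⟩, hconf⟩ := hP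
  simp only [winningFamily, Set.mem_ofPred_eq, Set.sdiff_subset, true_and, not_forall] at hlose
  obtain ⟨Q, hQ, hsub, hQa⟩ := hlose
  exact hcsp.eq_of_favours hab hφ hconf hQ ((hφ Q).resolve_left hQa)
    fun v hv hnb => hsub ⟨hv, fun h => hnb h.1⟩

theorem mem_classA_winningFamily_self (hab : a ≠ b) (hcsp : CSP φ)
    (hφ : ∀ P, φ P = a ∨ φ P = b) (hI : ∀ v ∉ I, ¬ Indiff (P v) b a) (hPa : φ P = a) :
    P ∈ ClassA a b I P (winningFamily φ a b I P) := by
  refine ⟨⟨Set.inter_subset_right, fun R hR hsub => ?_⟩, fun v _ => Or.inl rfl⟩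
  refine hcsp.eq_of_favours hab.symm (fun P => (hφ P).symm) hR (fun v _ => Or.inl rfl) hPa
    fun v hv hRa => spref_of_not_indiff (P v) (hI v hv) fun hPa => hRa (hsub ⟨hPa, hv⟩)

theorem compl_empty_mem_winningFamily (hab : a ≠ b) (hcsp : CSP φ)
    (hφ : ∀ P, φ P = a ∨ φ P = b) (ha : a ∈ Set.range φ) :
    (∅ : Set V)ᶜ ∈ winningFamily φ a b ∅ pc := by
  obtain ⟨Q, hQ⟩ := ha
  refine ⟨subset_rfl, fun P hP hsub => ?_⟩
  exact hcsp.eq_of_favours hab.symm (fun P => (hφ P).symm) (pc := pc) hP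
    (fun v hv => (Set.notMem_empty v hv).elim) hQ fun v hv hPa => (hPa (hsub hv)).elim

theorem empty_notMem_winningFamily (hab : a ≠ b) (hb : b ∈ Set.range φ) :
    ∅ ∉ winningFamily φ a b ∅ pc := by
  obtain ⟨Q, hQ⟩ := hb
  exact fun h => hab ((h.2 Q (fun v hv => (Set.notMem_empty v hv).elim)
    (Set.empty_subset _)).symm.trans hQ)

end WinningFamily

open Classical in
def sideFamily (φ : Profile V A → A) (a b : A) (I : Set V) (pc : Profile V A) : Set (Set V) :=
  if φ pc = a then winningFamily φ a b I pc else dualF Iᶜ (winningFamily φ b a I pc)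

section SideFamily

variable {φ : Profile V A → A} {a b : A} {I : Set V} {pc : Profile V A} {P : Profile V A}

theorem sscf_sideFamily : SSCF Iᶜ (sideFamily φ a b I pc) := by
  unfold sideFamily
  split_ifs
  exacts [sscf_winningFamily, sscf_winningFamily.dual]

theorem eq_of_mem_classA_sideFamily (hab : a ≠ b) (hcsp : CSP φ)
    (hφ : ∀ P, φ P = a ∨ φ P = b) (hP : P ∈ ClassA a b I pc (sideFamily φ a b I pc)) :
    φ P = a := by
  unfold sideFamily at hP
  split_ifs at hP
  · exact eq_of_mem_classA_winningFamily hP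
  · exact eq_of_mem_classB_winningFamily hab.symm hcsp (fun P => (hφ P).symm) hP

theorem eq_of_mem_classB_sideFamily (hab : a ≠ b) (hcsp : CSP φ)
    (hφ : ∀ P, φ P = a ∨ φ P = b) (hP : P ∈ ClassB a b I pc (sideFamily φ a b I pc)) :
    φ P = b := by
  unfold sideFamily at hP
  split_ifs at hP
  · exact eq_of_mem_classB_winningFamily hab hcsp hφ hP
  · obtain ⟨hD, hconf⟩ := hP
    rw [dualF_dualF sscf_winningFamily.1] at hD
    exact eq_of_mem_classA_winningFamily ⟨hD, hconf⟩

theorem mem_pClass_sideFamily_self (hab : a ≠ b) (hcsp : CSP φ)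
    (hφ : ∀ P, φ P = a ∨ φ P = b) (P : Profile V A) :
    P ∈ PClass a b (Iset a b P) P (sideFamily φ a b (Iset a b P) P) := by
  unfold sideFamily
  split_ifs with hPa
  · exact Or.inl (mem_classA_winningFamily_self hab hcsp hφ
      (fun v hv h => hv ⟨h.2, h.1⟩) hPa)
  · obtain ⟨hD, hconf⟩ := mem_classA_winningFamily_self (I := Iset a b P) hab.symm hcsp
      (fun P => (hφ P).symm) (fun v hv => hv) ((hφ P).resolve_left hPa)
    exact Or.inr ⟨by rwa [dualF_dualF sscf_winningFamily.1], hconf⟩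

theorem sideFamily_empty (hab : a ≠ b) (hcsp : CSP φ) (hφ : ∀ P, φ P = a ∨ φ P = b)
    (ha : a ∈ Set.range φ) (hb : b ∈ Set.range φ) :
    (∅ : Set V)ᶜ ∈ sideFamily φ a b ∅ pc ∧ ∅ ∉ sideFamily φ a b ∅ pc := by
  unfold sideFamily
  split_ifs
  · exact ⟨compl_empty_mem_winningFamily hab hcsp hφ ha, empty_notMem_winningFamily hab hb⟩
  · exact ⟨self_mem_dualF (empty_notMem_winningFamily hab.symm ha),
      empty_notMem_dualF (compl_empty_mem_winningFamily hab.symm hcsp (fun P => (hφ P).symm) hb)⟩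

end SideFamily

def levelDomain (a b : A) (g : Ordinal.{max u v} → Profile V A) (l : Ordinal.{max u v}) :
    Set V :=
  if l = 0 then ∅ else Iset a b (g l)

section Levels

variable {a b : A} {φ : Profile V A → A} {β : Ordinal.{max u v}}
  {g : Ordinal.{max u v} → Profile V A}

theorem levelDomain_zero : levelDomain a b g 0 = ∅ := if_pos rfl

theorem isDoubleCollection_sideFamily (hβ : 1 ≤ β) :
    IsDoubleCollection a b β (levelDomain a b g) g
      (fun l => sideFamily φ a b (levelDomain a b g l) (g l)) := by
  refine ⟨hβ, fun l _ => ⟨fun v hv => ?_, sscf_sideFamily⟩⟩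
  unfold levelDomain at hv
  split_ifs at hv
  exacts [(Set.notMem_empty v hv).elim, hv]

theorem isPsiOf_sideFamily (hab : a ≠ b) (hcsp : CSP φ) (hφ : ∀ P, φ P = a ∨ φ P = b)
    (x : A) (hg : ∀ P, ∃ l, l ≠ 0 ∧ l < β ∧ g l = P) :
    IsPsiOf a b x β (levelDomain a b g) g
      (fun l => sideFamily φ a b (levelDomain a b g l) (g l)) φ := by
  intro P
  refine ⟨fun l _ => ⟨eq_of_mem_classA_sideFamily hab hcsp hφ,
    eq_of_mem_classB_sideFamily hab hcsp hφ⟩, fun hempty => ?_⟩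
  obtain ⟨l, hl0, hlβ, rfl⟩ := hg P
  have hl : l ∈ idxSet a b β (levelDomain a b g) g
      (fun l => sideFamily φ a b (levelDomain a b g l) (g l)) (g l) := by
    refine ⟨hlβ, ?_⟩
    simp only [levelDomain, if_neg hl0]
    exact mem_pClass_sideFamily_self hab hcsp hφ (g l)
  exact (Set.notMem_empty l (hempty ▸ hl)).elim

end Levels

universe w

theorem exists_ordinal_enumeration (α : Type w) [Nonempty α] :
    ∃ (β : Ordinal.{w}) (g : Ordinal.{w} → α), 1 ≤ β ∧ (∀ y, ∃ l, l ≠ 0 ∧ l < β ∧ g l = y) ∧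
      (Finite α → β < Ordinal.omega0) := by
  let r : α → α → Prop := WellOrderingRel
  let ι : α → Ordinal.{w} := fun y => Order.succ (Ordinal.typein r y)
  have hι : Function.Injective ι := fun y z h =>
    Ordinal.typein_injective r (Order.succ_injective h)
  refine ⟨Order.succ (Ordinal.type r), Function.invFun ι, ?_,
    fun y => ⟨ι y, (Order.bot_lt_succ _).ne', Order.succ_lt_succ (Ordinal.typein_lt_type r y),
      Function.leftInverse_invFun hι y⟩, fun _ => ?_⟩
  · simp
  · have := Fintype.ofFinite α
    rw [Ordinal.type_fintype]
    exact Ordinal.isSuccLimit_omega0.succ_lt (Ordinal.natCast_lt_omega0 _)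

theorem representation_theorem_general (a b : A) (hab : a ≠ b)
    (φ : Profile V A → A) (hcsp : CSP φ) (hrange : Set.range φ = {a, b})
    (x : A) :
    ∃ (β : Ordinal.{max u v}) (I : Ordinal.{max u v} → Set V)
      (pc : Ordinal.{max u v} → V → WeakOrd A) (F : Ordinal.{max u v} → Set (Set V)),
      IsDoubleCollection a b β I pc F ∧
      IsPsiOf a b x β I pc F φ ∧
      (F 0).Nonempty ∧ ∅ ∉ F 0 ∧
      (dualF (I 0)ᶜ (F 0)).Nonempty ∧ ∅ ∉ dualF (I 0)ᶜ (F 0) ∧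
      (Finite V → Finite A → β < Ordinal.omega0.{max u v}) := by
  have ha : a ∈ Set.range φ := hrange ▸ Set.mem_insert a _
  have hb : b ∈ Set.range φ := hrange ▸ Set.mem_insert_of_mem a rfl
  have hφ : ∀ P, φ P = a ∨ φ P = b := fun P => hrange.subset (Set.mem_range_self P)
  have : Nonempty (Profile V A) := ⟨ha.choose⟩
  obtain ⟨β, g, hβ, hg, hfin⟩ := exists_ordinal_enumeration (Profile V A)
  obtain ⟨huniv, hempty⟩ := sideFamily_empty (pc := g 0) hab hcsp hφ ha hb
  refine ⟨β, levelDomain a b g, g, fun l => sideFamily φ a b (levelDomain a b g l) (g l),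
    isDoubleCollection_sideFamily hβ, isPsiOf_sideFamily hab hcsp hφ x hg, ?_, ?_, ?_, ?_,
    fun _ _ => hfin inferInstance⟩ <;> simp only [levelDomain_zero]
  exacts [⟨_, huniv⟩, hempty, ⟨_, self_mem_dualF hempty⟩, empty_notMem_dualF huniv]

/-- Theorem 4.5 (structure/representation theorem): every CSP scf with range `{a,b}`
of cardinality two is the ψ-type scf associated with `x = φ(π)` (for `π` a profile of
unanimous indifference between `a` and `b`) and a suitable double collection; moreover
`F₀` and its dual `F₀°` are both nonempty (they consist of coalitions), and the
indexing ordinal `β` is finite whenever both `V` and `A` are finite. -/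
theorem representation_theorem (a b : A) (hab : a ≠ b)
    (φ : Profile V A → A) (hcsp : CSP φ) (hrange : Set.range φ = {a, b})
    (pu : Profile V A) (hpu : ∀ v, Indiff (pu v) a b) (x : A) (hx : x = φ pu) :
    ∃ (β : Ordinal.{max u v}) (I : Ordinal.{max u v} → Set V)
      (pc : Ordinal.{max u v} → V → WeakOrd A) (F : Ordinal.{max u v} → Set (Set V)),
      IsDoubleCollection a b β I pc F ∧
      IsPsiOf a b x β I pc F φ ∧
      (F 0).Nonempty ∧ ∅ ∉ F 0 ∧
      (dualF (I 0)ᶜ (F 0)).Nonempty ∧ ∅ ∉ dualF (I 0)ᶜ (F 0) ∧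
      (Finite V → Finite A → β < Ordinal.omega0.{max u v}) :=
  representation_theorem_general a b hab φ hcsp hrange x
end
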